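/- Let M be a positive semidefinite 2×2 block operator matrix M = [[A, B],[B*, C]] on H₁ ⊕ H₂ admitting a factorization M = L*L where L = [[P, 0],[Q, R]] is lower triangular. Then the Schur complement of M supported on the first block, S(M;{0}) (the largest positive operator X on H₁ with M - X⊕0 ≥ 0), equals P*P if and only if ran Q ⊆ closure(ran R). -/

import Mathlib

open scoped InnerProductSpace
open ContinuousLinearMap

/-- Positivity of the block operator matrix `[[A, B], [B*, C]]` on `H₁ ⊕ H₂`,
expressed through its quadratic form. -/
def BlockPos2 {H₁ H₂ : Type*} [NormedAddCommGroup H₁] [InnerProductSpace ℂ H₁]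
    [NormedAddCommGroup H₂] [InnerProductSpace ℂ H₂]
    (A : H₁ →L[ℂ] H₁) (B : H₂ →L[ℂ] H₁) (C : H₂ →L[ℂ] H₂) : Prop :=
  ∀ (x : H₁) (y : H₂),
    0 ≤ (⟪A x, x⟫_ℂ).re + 2 * (⟪B y, x⟫_ℂ).re + (⟪C y, y⟫_ℂ).re

/-- `S` is the Schur complement of the positive block operator matrix
`[[A, B], [B*, C]]` supported on the first block: the largest positive operator
`X` on `H₁` such that `M - X ⊕ 0 ≥ 0`. -/
def IsSchurComplementFst {H₁ H₂ : Type*} [NormedAddCommGroup H₁] [InnerProductSpace ℂ H₁]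
    [NormedAddCommGroup H₂] [InnerProductSpace ℂ H₂] [CompleteSpace H₁] [CompleteSpace H₂]
    (A : H₁ →L[ℂ] H₁) (B : H₂ →L[ℂ] H₁) (C : H₂ →L[ℂ] H₂) (S : H₁ →L[ℂ] H₁) : Prop :=
  S.IsPositive ∧ BlockPos2 (A - S) B C ∧
    ∀ X : H₁ →L[ℂ] H₁, X.IsPositive → BlockPos2 (A - X) B C →
      ∀ x : H₁, (⟪X x, x⟫_ℂ).re ≤ (⟪S x, x⟫_ℂ).re

/-!
For `M = L* L` the quadratic form of `M - X ⊕ 0` at `(x, y)` is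
`‖P x‖² - re ⟪X x, x⟫ + ‖Q x + R y‖²`. The infimum of `‖Q x + R y‖` over `y` is the distance from
`Q x` to `ran R`, namely `‖Π (Q x)‖` with `Π` the orthogonal projection onto `(ran R)ᗮ`. Hence
`S(M;{0})` has quadratic form `‖P x‖² + ‖Π (Q x)‖²`, and it equals `P* P` exactly when `Π Q = 0`,
i.e. when `ran Q ⊆ (ran R)ᗮᗮ = closure (ran R)`.
-/

namespace Submodule

variable {𝕜 E : Type*} [RCLike 𝕜] [NormedAddCommGroup E] [InnerProductSpace 𝕜 E]

theorem norm_add_sq_eq_norm_starProjection_sq_add (N : Submodule 𝕜 E) [N.HasOrthogonalProjection]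
    (v : E) {w : E} (hw : w ∈ Nᗮ) :
    ‖v + w‖ ^ 2 = ‖N.starProjection v‖ ^ 2 + ‖v - N.starProjection v + w‖ ^ 2 := by
  have horth : ⟪N.starProjection v, v - N.starProjection v + w⟫_𝕜 = 0 :=
    N.inner_right_of_mem_orthogonal (N.starProjection_apply_mem v)
      (add_mem (sub_starProjection_mem_orthogonal v) hw)
  simpa only [sq, add_sub_cancel, ← add_assoc] using
    norm_add_sq_eq_norm_sq_add_norm_sq_of_inner_eq_zero _ _ horth

end Submodule

theorem ContinuousLinearMap.coe_range_orthogonal_orthogonal {𝕜 E F : Type*} [RCLike 𝕜]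
    [NormedAddCommGroup E] [InnerProductSpace 𝕜 E] [NormedAddCommGroup F] [InnerProductSpace 𝕜 F]
    [CompleteSpace F] (R : E →L[𝕜] F) : (R.rangeᗮᗮ : Set F) = closure (Set.range R) := by
  rw [Submodule.orthogonal_orthogonal_eq_closure, Submodule.topologicalClosure_coe]
  rfl

section BlockOperator

variable {H₁ H₂ : Type*} [NormedAddCommGroup H₁] [InnerProductSpace ℂ H₁]
  [NormedAddCommGroup H₂] [InnerProductSpace ℂ H₂] [CompleteSpace H₁] [CompleteSpace H₂]

theorem re_inner_adjoint_comp_self (T : H₁ →L[ℂ] H₂) (x : H₁) :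
    (⟪(T.adjoint ∘L T) x, x⟫_ℂ).re = ‖T x‖ ^ 2 :=
  (apply_norm_sq_eq_inner_adjoint_left T x).symm

theorem blockForm_add_adjoint_comp_eq (T : H₁ →L[ℂ] H₁) (Q : H₁ →L[ℂ] H₂) (R : H₂ →L[ℂ] H₂)
    (x : H₁) (y : H₂) :
    (⟪(T + Q.adjoint ∘L Q) x, x⟫_ℂ).re + 2 * (⟪(Q.adjoint ∘L R) y, x⟫_ℂ).re
      + (⟪(R.adjoint ∘L R) y, y⟫_ℂ).re = (⟪T x, x⟫_ℂ).re + ‖Q x + R y‖ ^ 2 := by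
  rw [add_apply, inner_add_left, Complex.add_re, re_inner_adjoint_comp_self,
    re_inner_adjoint_comp_self, comp_apply, adjoint_inner_left, @norm_add_sq ℂ, inner_re_symm,
    RCLike.re_to_complex]
  ring

theorem blockPos2_add_adjoint_comp_iff (T : H₁ →L[ℂ] H₁) (Q : H₁ →L[ℂ] H₂) (R : H₂ →L[ℂ] H₂) :
    BlockPos2 (T + Q.adjoint ∘L Q) (Q.adjoint ∘L R) (R.adjoint ∘L R) ↔
      ∀ x, 0 ≤ (⟪T x, x⟫_ℂ).re + ‖R.rangeᗮ.starProjection (Q x)‖ ^ 2 := by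
  simp only [BlockPos2, blockForm_add_adjoint_comp_eq]
  constructor
  · intro h x
    have hclosed : IsClosed {w : H₂ | 0 ≤ (⟪T x, x⟫_ℂ).re + ‖Q x + w‖ ^ 2} :=
      isClosed_le continuous_const (by fun_prop)
    have hrange : Set.range R ⊆ {w : H₂ | 0 ≤ (⟪T x, x⟫_ℂ).re + ‖Q x + w‖ ^ 2} := by
      rintro _ ⟨y, rfl⟩
      exact h x y
    -- the point of `closure (ran R)` nearest to `-Q x`
    have hmem : -(Q x - R.rangeᗮ.starProjection (Q x)) ∈ closure (Set.range R) := by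
      rw [← R.coe_range_orthogonal_orthogonal]
      exact neg_mem (Submodule.sub_starProjection_mem_orthogonal _)
    simpa using closure_minimal hrange hclosed hmem
  · intro h x y
    have hy : R y ∈ R.rangeᗮᗮ :=
      Submodule.le_orthogonal_orthogonal _ (LinearMap.mem_range_self _ y)
    rw [R.rangeᗮ.norm_add_sq_eq_norm_starProjection_sq_add (Q x) hy]
    nlinarith [h x, sq_nonneg ‖Q x - R.rangeᗮ.starProjection (Q x) + R y‖]

theorem blockPos2_adjoint_comp_sub_iff (P X : H₁ →L[ℂ] H₁) (Q : H₁ →L[ℂ] H₂) (R : H₂ →L[ℂ] H₂) :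
    BlockPos2 (P.adjoint ∘L P + Q.adjoint ∘L Q - X) (Q.adjoint ∘L R) (R.adjoint ∘L R) ↔
      ∀ x, (⟪X x, x⟫_ℂ).re ≤ ‖P x‖ ^ 2 + ‖R.rangeᗮ.starProjection (Q x)‖ ^ 2 := by
  rw [add_sub_right_comm, blockPos2_add_adjoint_comp_iff]
  simp only [sub_apply, inner_sub_left, Complex.sub_re, re_inner_adjoint_comp_self]
  exact forall_congr' fun x => by constructor <;> intro h <;> linarith

theorem isSchurComplementFst_adjoint_comp_iff (P S : H₁ →L[ℂ] H₁) (Q : H₁ →L[ℂ] H₂)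
    (R : H₂ →L[ℂ] H₂) :
    IsSchurComplementFst (P.adjoint ∘L P + Q.adjoint ∘L Q) (Q.adjoint ∘L R) (R.adjoint ∘L R) S ↔
      S.IsPositive ∧
        ∀ x, (⟪S x, x⟫_ℂ).re = ‖P x‖ ^ 2 + ‖R.rangeᗮ.starProjection (Q x)‖ ^ 2 := by
  set D := R.rangeᗮ.starProjection ∘L Q
  have hpos : (P.adjoint ∘L P + D.adjoint ∘L D).IsPositive :=
    (isPositive_adjoint_comp_self P).add (isPositive_adjoint_comp_self D)
  have hform : ∀ x, (⟪(P.adjoint ∘L P + D.adjoint ∘L D) x, x⟫_ℂ).re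
      = ‖P x‖ ^ 2 + ‖R.rangeᗮ.starProjection (Q x)‖ ^ 2 := fun x => by
    rw [add_apply, inner_add_left, Complex.add_re, re_inner_adjoint_comp_self,
      re_inner_adjoint_comp_self, comp_apply]
  simp only [IsSchurComplementFst, blockPos2_adjoint_comp_sub_iff]
  constructor
  · rintro ⟨hS, hle, hmax⟩
    exact ⟨hS, fun x => le_antisymm (hle x) (hform x ▸ hmax _ hpos (fun x => (hform x).le) x)⟩
  · rintro ⟨hS, hSform⟩
    exact ⟨hS, fun x => (hSform x).le, fun X _ hX x => (hX x).trans (hSform x).ge⟩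

end BlockOperator

theorem schur_complement_eq_iff_range_subset
    {H₁ H₂ : Type*} [NormedAddCommGroup H₁] [InnerProductSpace ℂ H₁]
    [NormedAddCommGroup H₂] [InnerProductSpace ℂ H₂] [CompleteSpace H₁] [CompleteSpace H₂]
    (A P : H₁ →L[ℂ] H₁) (C R : H₂ →L[ℂ] H₂) (B : H₂ →L[ℂ] H₁) (Q : H₁ →L[ℂ] H₂)
    (hA : A = P.adjoint ∘L P + Q.adjoint ∘L Q)
    (hB : B = Q.adjoint ∘L R)
    (hC : C = R.adjoint ∘L R) :
    IsSchurComplementFst A B C (P.adjoint ∘L P) ↔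
      Set.range Q ⊆ closure (Set.range R) := by
  subst hA hB hC
  rw [isSchurComplementFst_adjoint_comp_iff, ← R.coe_range_orthogonal_orthogonal,
    Set.range_subset_iff]
  simp only [isPositive_adjoint_comp_self, re_inner_adjoint_comp_self, true_and,
    left_eq_add, pow_eq_zero_iff two_ne_zero, norm_eq_zero,
    Submodule.starProjection_apply_eq_zero_iff, SetLike.mem_coe]
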